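/- arXiv:2212.05825 — 3 statements merged into one kernel-verified Lean document; each statement's English description precedes it below -/
import Mathlib

section
/- Let θ ∈ Irr(N), let K be a group with N ⊴ K ≤ Stab_G(θ) and K/N finite, and let θ̂ be a strong extension of θ to K. Then for every x ∈ K there exists n ∈ N such that θ̂(xn) ≠ 0. Consequently, if ψ : K → ℂ^× is a function and μ, μ′ : K/N → ℂ^× are functions with θ̂·ψ·μ = θ̂·ψ·μ′ (as functions on K, where μ, μ′ are evaluated at cosets), then μ = μ′; in particular the function μ(gN) with ᵍθ̂ = θ̂·ψ_g|_K·μ(gN) is uniquely determined by gN, θ̂ and ψ_g|_K. -/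
/-!
If `θ̂` vanished on a whole coset `xN`, then `tr (Π(x) Θ(m)) = θ̂(xm) = 0` for all `m ∈ N`, so
`Π(x)` would be trace-orthogonal to the linear span of `Θ(N)`. By Burnside's theorem that span is
the full matrix algebra, since `Θ` is irreducible, and the trace form on it is nondegenerate;
hence `Π(x) = 0`, contradicting its invertibility. The uniqueness of `μ` follows by cancelling
`θ̂(xm) ψ(xm) ≠ 0` at such a point `xm` of the coset, on which `μ` and `μ'` are constant.
-/

namespace TwistPaper

variable {G : Type*} [Group G]

/-- `χ : G → ℂ` is the zero-extension of an irreducible (finite-dimensional complex)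
character of the subgroup `H` of `G`. -/
def IsIrrChar (H : Subgroup G) (χ : G → ℂ) : Prop :=
  ∃ n : ℕ, 0 < n ∧ ∃ ρ : H →* (Matrix (Fin n) (Fin n) ℂ)ˣ,
    (∀ U : Submodule ℂ (Fin n → ℂ),
        (∀ h : H, ∀ v ∈ U, ((ρ h : Matrix (Fin n) (Fin n) ℂ).mulVec v) ∈ U) → U = ⊥ ∨ U = ⊤) ∧
    (∀ h : H, χ (h : G) = Matrix.trace ((ρ h : Matrix (Fin n) (Fin n) ℂ))) ∧
    ∀ g : G, g ∉ H → χ g = 0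

/-- `θ` is an irreducible constituent of the restriction of `lam` to `N`. -/
def LiesAbove (N : Subgroup G) (lam θ : G → ℂ) : Prop :=
  ∃ (k : ℕ) (c : Fin k → ℕ) (χs : Fin k → G → ℂ),
    (∀ i, IsIrrChar N (χs i)) ∧
    (∀ x ∈ N, lam x = ∑ i, (c i : ℂ) * χs i x) ∧
    ∃ i, 0 < c i ∧ ∀ x ∈ N, χs i x = θ x

/-- `G`-twist equivalence of (characters of) the subgroup `H`. -/
def TwistEq (H : Subgroup G) (f g : G → ℂ) : Prop :=
  ∃ ψ : G →* ℂˣ, ∀ x ∈ H, f x = g x * (ψ x : ℂ)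

/-- `lam` lies above some `G`-twist of `θ`; i.e. the twist class of `lam` is in
`Irr̃(H ∣ θ̃)`. -/
def TwistLiesAbove (N : Subgroup G) (lam θ : G → ℂ) : Prop :=
  ∃ ψ : G →* ℂˣ, LiesAbove N lam fun x => θ x * (ψ x : ℂ)

/-- `g` stabilises the character `θ` of `N`, i.e. `g ∈ K_θ̃ = Stab_G(θ)`. -/
def InK (N : Subgroup G) (θ : G → ℂ) (g : G) : Prop :=
  ∀ x ∈ N, θ (g⁻¹ * x * g) = θ x

/-- `g` stabilises the `G`-twist class of the character `θ` of `N`,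
i.e. `g ∈ L_θ̃ = Stab_G(θ̃)`. -/
def InL (N : Subgroup G) (θ : G → ℂ) (g : G) : Prop :=
  ∃ ψ : G →* ℂˣ, ∀ x ∈ N, θ (g⁻¹ * x * g) = θ x * (ψ x : ℂ)

/-- The conjugate character `ᵍθ`. -/
def conjChar (g : G) (θ : G → ℂ) : G → ℂ := fun x => θ (g⁻¹ * x * g)

/-- The induced character from `H` to `H'` (for `H ≤ H'` of finite index), of the
zero-extension `χ` of a character of `H`:  `Ind χ (x) = Σ_{cosets gH} χ°(g⁻¹xg)`. -/
noncomputable def indChar (H H' : Subgroup G) (χ : G → ℂ) : G → ℂ := fun x =>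
  ∑ᶠ c : H' ⧸ H.subgroupOf H',
    χ (((Quotient.out c : H') : G)⁻¹ * x * ((Quotient.out c : H') : G))

/-- `Θ : G → Matrix` restricts on `N` to an irreducible representation of `N`. -/
def IsIrrRep (N : Subgroup G) {n : ℕ} (Θ : G → Matrix (Fin n) (Fin n) ℂ) : Prop :=
  (∀ x ∈ N, ∀ y ∈ N, Θ (x * y) = Θ x * Θ y) ∧ Θ 1 = 1 ∧ (∀ x ∈ N, IsUnit (Θ x)) ∧
  ∀ U : Submodule ℂ (Fin n → ℂ), (∀ x ∈ N, ∀ v ∈ U, (Θ x).mulVec v ∈ U) → U = ⊥ ∨ U = ⊤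

/-- `Pi` is (on `K`) a strong extension of the representation `Θ` of `N`, with factor set
`αh`. -/
def IsStrongExtRep (N K : Subgroup G) {n : ℕ} (Θ Pi : G → Matrix (Fin n) (Fin n) ℂ)
    (αh : G → G → ℂˣ) : Prop :=
  (∀ x ∈ N, Pi x = Θ x) ∧ (∀ g ∈ K, IsUnit (Pi g)) ∧
  (∀ g ∈ K, ∀ x ∈ N, Pi (g * x) = Pi g * Θ x ∧ Pi (x * g) = Θ x * Pi g) ∧
  (∀ g ∈ K, ∀ h ∈ K, Pi (g * h) = (αh g h : ℂ) • (Pi g * Pi h))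

/-- `θhat` is (on `K`) the character of a strong extension, with factor set `αh`, of a
representation of `N` affording the irreducible character `θ`. -/
def IsStrongExt (N K : Subgroup G) (θ θhat : G → ℂ) (αh : G → G → ℂˣ) : Prop :=
  ∃ n : ℕ, 0 < n ∧ ∃ Θ Pi : G → Matrix (Fin n) (Fin n) ℂ,
    IsIrrRep N Θ ∧ (∀ x ∈ N, θ x = Matrix.trace (Θ x)) ∧ (∀ g : G, g ∉ N → θ g = 0) ∧
    IsStrongExtRep N K Θ Pi αh ∧ ∀ g ∈ K, θhat g = Matrix.trace (Pi g)

/-- `θhat` is (on `K`) a strong extension of the irreducible character `θ` of `N`. -/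
def IsStrongExtChar (N K : Subgroup G) (θ θhat : G → ℂ) : Prop :=
  ∃ αh : G → G → ℂˣ, IsStrongExt N K θ θhat αh

/-- `f` is constant on the cosets of `N` lying in `K`; so `f` represents a function
`K/N → ℂˣ`, i.e. an element of `F_K`. -/
def NConst (N K : Subgroup G) (f : G → ℂˣ) : Prop :=
  ∀ x ∈ K, ∀ n ∈ N, f (x * n) = f x

/-- `ν` represents an element of `Lin(K/N)`: a homomorphism on `K` trivial on `N`. -/
def LinKN (N K : Subgroup G) (ν : G → ℂˣ) : Prop :=
  (∀ x ∈ K, ∀ y ∈ K, ν (x * y) = ν x * ν y) ∧ ∀ n ∈ N, ν n = 1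

/-- `ν` represents an element of `Γ_{K,θ̃}`: an element of `Lin(K/N)` with
`θ̂·ε|_K = θ̂·ν` for some `ε ∈ Lin(G)`. -/
def inGamma (N K : Subgroup G) (θhat : G → ℂ) (ν : G → ℂˣ) : Prop :=
  LinKN N K ν ∧ ∃ ε : G →* ℂˣ, ∀ x ∈ K, θhat x * (ε x : ℂ) = θhat x * (ν x : ℂ)

/-- The data of the twisting characters `ψ g ∈ Lin(G)` and functions
`μ g : K/N → ℂˣ` with `ᵍθ̂ = θ̂·ψ_g|_K·μ(gN)` for every `g ∈ L`. -/
def MuFamily (N K L : Subgroup G) (θ θhat : G → ℂ) (ψ : G → G →* ℂˣ)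
    (μ : G → G → ℂˣ) : Prop :=
  ∀ g ∈ L,
    (∀ x ∈ N, θ (g⁻¹ * x * g) = θ x * (ψ g x : ℂ)) ∧
    NConst N K (μ g) ∧
    ∀ x ∈ K, θhat (g⁻¹ * x * g) = θhat x * (ψ g x : ℂ) * (μ g x : ℂ)

/-- `Lp/N` is a Sylow `p`-subgroup of `L/N`. -/
def IsSylowOver (p : ℕ) (N Lp L : Subgroup G) : Prop :=
  N ≤ Lp ∧ Lp ≤ L ∧ (∃ a : ℕ, N.relIndex Lp = p ^ a) ∧ ¬ p ∣ Lp.relIndex L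

end TwistPaper

open Module

section Burnside

variable {k V : Type*} [Field k] [AddCommGroup V] [Module k V]

theorem Algebra.isSimpleModule_adjoin_of_irreducible [Nontrivial V] {s : Set (End k V)}
    (hs : ∀ U : Submodule k V, (∀ a ∈ s, ∀ v ∈ U, a v ∈ U) → U = ⊥ ∨ U = ⊤) :
    IsSimpleModule (Algebra.adjoin k s) V where
  eq_bot_or_eq_top U := by
    simpa [← Submodule.restrictScalars_eq_bot_iff k, ← Submodule.restrictScalars_eq_top_iff k]
      using hs (U.restrictScalars k) fun a ha v hv =>
        U.smul_mem (⟨a, Algebra.subset_adjoin ha⟩ : Algebra.adjoin k s) hv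

variable [IsAlgClosed k] [FiniteDimensional k V]

theorem Module.End.exists_eq_smul_of_isSimpleModule {A : Type*} [Ring A] [Algebra k A]
    [Module A V] [IsScalarTower k A V] [IsSimpleModule A V] (f : V →ₗ[A] V) :
    ∃ c : k, ∀ v, f v = c • v := by
  have : Nontrivial V := IsSimpleModule.nontrivial A V
  obtain ⟨c, hc⟩ := Module.End.exists_eigenvalue (f.restrictScalars k)
  obtain ⟨v, hv⟩ := hc.exists_hasEigenvector
  refine ⟨c, fun w => ?_⟩
  have hker : f - c • LinearMap.id = 0 :=
    ((f - c • LinearMap.id).bijective_or_eq_zero).resolve_left fun hbij =>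
      hv.2 (hbij.1 (by simpa [sub_eq_zero] using hv.apply_eq_smul))
  simpa [sub_eq_zero] using LinearMap.congr_fun hker w

/-- **Burnside's theorem**. -/
theorem Module.End.adjoin_eq_top_of_irreducible {s : Set (End k V)}
    (hs : ∀ U : Submodule k V, (∀ a ∈ s, ∀ v ∈ U, a v ∈ U) → U = ⊥ ∨ U = ⊤) :
    Algebra.adjoin k s = ⊤ := by
  rcases subsingleton_or_nontrivial V with hV | hV
  · exact Subsingleton.elim _ _
  set A := Algebra.adjoin k s
  have := Algebra.isSimpleModule_adjoin_of_irreducible hs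
  refine eq_top_iff.mpr fun φ _ => ?_
  -- By Schur's lemma `End A V` consists of scalars, so every `k`-linear `φ` commutes with it.
  let Φ : End (End A V) V :=
    { toFun := φ
      map_add' := φ.map_add
      map_smul' := fun f v => by
        obtain ⟨c, hc⟩ := Module.End.exists_eq_smul_of_isSimpleModule (k := k) f
        simp [Module.End.smul_def, hc] }
  classical
  let b := Module.finBasis k V
  obtain ⟨r, hr⟩ := jacobson_density Φ (Finset.univ.image b)
  have : φ = r := b.ext fun i => hr (b i) (Finset.mem_image_of_mem b (Finset.mem_univ i))
  exact this ▸ r.2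

end Burnside

section MatrixBurnside

variable {k ι : Type*} [Field k] [Fintype ι] [DecidableEq ι]

theorem Matrix.adjoin_eq_top_of_irreducible [IsAlgClosed k] {s : Set (Matrix ι ι k)}
    (hs : ∀ U : Submodule k (ι → k), (∀ a ∈ s, ∀ v ∈ U, a.mulVec v ∈ U) → U = ⊥ ∨ U = ⊤) :
    Algebra.adjoin k s = ⊤ := by
  let e := (Matrix.toLinAlgEquiv' : Matrix ι ι k ≃ₐ[k] End k (ι → k))
  apply Subalgebra.map_injective (f := e.toAlgHom) e.injective
  rw [AlgHom.map_adjoin, Algebra.map_top, (AlgHom.range_eq_top _).mpr e.surjective]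
  refine Module.End.adjoin_eq_top_of_irreducible fun U hU => hs U fun a ha v hv => ?_
  simpa [e, Matrix.toLinAlgEquiv'_apply, Matrix.toLin'_apply] using hU (e a) ⟨a, ha, rfl⟩ v hv

theorem Matrix.eq_zero_of_forall_trace_mul_eq_zero {S : Submonoid (Matrix ι ι k)}
    (hS : Algebra.adjoin k (S : Set (Matrix ι ι k)) = ⊤) {B : Matrix ι ι k}
    (hB : ∀ a ∈ S, (B * a).trace = 0) : B = 0 := by
  have hspan : Submodule.span k (S : Set (Matrix ι ι k)) = ⊤ := by
    simpa [Algebra.adjoin_eq_span, Submonoid.closure_eq] using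
      congrArg Subalgebra.toSubmodule hS
  have hL : Matrix.traceLinearMap ι k k ∘ₗ LinearMap.mulLeft k B = 0 :=
    LinearMap.ext_on hspan fun a ha => hB a ha
  exact Matrix.ext_iff_trace_mul_right.mpr fun x => by
    simpa using LinearMap.congr_fun hL x

end MatrixBurnside

namespace TwistPaper

variable {G : Type*} [Group G]

theorem IsIrrRep.adjoin_image_eq_top {N : Subgroup G} {n : ℕ}
    {Θ : G → Matrix (Fin n) (Fin n) ℂ} (hΘ : IsIrrRep N Θ) :
    Algebra.adjoin ℂ (Θ '' N) = ⊤ :=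
  Matrix.adjoin_eq_top_of_irreducible fun U hU =>
    hΘ.2.2.2 U fun x hx v hv => hU (Θ x) ⟨x, hx, rfl⟩ v hv

theorem IsStrongExtChar.exists_mul_ne_zero {N K : Subgroup G} (hNK : N ≤ K) {θ θhat : G → ℂ}
    (hse : IsStrongExtChar N K θ θhat) {x : G} (hx : x ∈ K) : ∃ m ∈ N, θhat (x * m) ≠ 0 := by
  obtain ⟨-, n, hn, Θ, Pi, hΘ, -, -, ⟨-, hPiU, hPimix, -⟩, hθhat⟩ := hse
  by_contra! hzero
  let S : Submonoid (Matrix (Fin n) (Fin n) ℂ) :=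
    { carrier := Θ '' N
      mul_mem' := by
        rintro _ _ ⟨y, hy, rfl⟩ ⟨z, hz, rfl⟩
        exact ⟨y * z, N.mul_mem hy hz, hΘ.1 y hy z hz⟩
      one_mem' := ⟨1, N.one_mem, hΘ.2.1⟩ }
  have hPix : Pi x = 0 := by
    refine Matrix.eq_zero_of_forall_trace_mul_eq_zero (S := S) hΘ.adjoin_image_eq_top ?_
    rintro _ ⟨m, hm, rfl⟩
    rw [← (hPimix x hx m hm).1, ← hθhat _ (K.mul_mem hx (hNK hm))]
    exact hzero m hm
  have : Nonempty (Fin n) := ⟨⟨0, hn⟩⟩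
  exact (hPiU x hx).ne_zero hPix

theorem NConst.eq_of_mul_eq_mul {N K : Subgroup G} (hNK : N ≤ K) {f : G → ℂ}
    (hf : ∀ x ∈ K, ∃ m ∈ N, f (x * m) ≠ 0) {μ μ' : G → ℂˣ} (hμ : NConst N K μ)
    (hμ' : NConst N K μ') (h : ∀ x ∈ K, f x * μ x = f x * μ' x) {x : G} (hx : x ∈ K) :
    μ x = μ' x := by
  obtain ⟨m, hm, hne⟩ := hf x hx
  rw [← hμ x hx m hm, ← hμ' x hx m hm]
  exact Units.ext (mul_left_cancel₀ hne (h _ (K.mul_mem hx (hNK hm))))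

theorem statement5_general (N K : Subgroup G) (hNK : N ≤ K)
    (θ θhat : G → ℂ)
    (hse : IsStrongExtChar N K θ θhat) :
    (∀ x ∈ K, ∃ n ∈ N, θhat (x * n) ≠ 0) ∧
    (∀ (ψ : G → ℂˣ) (μ μ' : G → ℂˣ), NConst N K μ → NConst N K μ' →
        (∀ x ∈ K, θhat x * (ψ x : ℂ) * (μ x : ℂ) = θhat x * (ψ x : ℂ) * (μ' x : ℂ)) →
        ∀ x ∈ K, μ x = μ' x) := by
  have hnz : ∀ x ∈ K, ∃ n ∈ N, θhat (x * n) ≠ 0 := fun x hx => hse.exists_mul_ne_zero hNK hx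
  refine ⟨hnz, fun ψ μ μ' hμ hμ' h x hx => hμ.eq_of_mul_eq_mul hNK ?_ hμ' h hx⟩
  intro y hy
  obtain ⟨m, hm, hne⟩ := hnz y hy
  exact ⟨m, hm, mul_ne_zero hne (ψ (y * m)).ne_zero⟩

/-- a strong extension `θ̂` of `θ ∈ Irr(N)` to `K` does not vanish on any
coset of `N` in `K`; consequently the functions `μ : K/N → ℂˣ` with
`θ̂·ψ·μ = θ̂·ψ·μ′` are uniquely determined, so `μ(gN)` is determined by `gN`, `θ̂`
and `ψ_g|_K`. -/
theorem statement5 (N K : Subgroup G) [N.Normal] (hfin : N.relIndex K ≠ 0) (hNK : N ≤ K)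
    (θ θhat : G → ℂ) (hKstab : ∀ k ∈ K, InK N θ k)
    (hse : IsStrongExtChar N K θ θhat) :
    (∀ x ∈ K, ∃ n ∈ N, θhat (x * n) ≠ 0) ∧
    (∀ (ψ : G → ℂˣ) (μ μ' : G → ℂˣ), NConst N K μ → NConst N K μ' →
        (∀ x ∈ K, θhat x * (ψ x : ℂ) * (μ x : ℂ) = θhat x * (ψ x : ℂ) * (μ' x : ℂ)) →
        ∀ x ∈ K, μ x = μ' x) :=
  statement5_general N K hNK θ θhat hse

end TwistPaper
end

section
/- The group Γ_{K,θ̃} is independent of the choice of representative of the twist class θ̃ and of the choice of strong extension: if ψ ∈ Lin(G), θ̂ is a strong extension of θ to K, and θ̂′ is any strong extension of θ·ψ|_N to K, then {ν ∈ Lin(K/N) : θ̂′·ε|_K = θ̂′·ν for some ε ∈ Lin(G)} = {ν ∈ Lin(K/N) : θ̂·ε|_K = θ̂·ν for some ε ∈ Lin(G)}. -/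
open Matrix

/-- Burnside's theorem, from the Jacobson density theorem: by Schur's lemma the endomorphisms of
the simple `adjoin k s`-module `V` are scalars, so every `k`-linear map commutes with them. -/
theorem Algebra.adjoin_eq_top_of_forall_invariant {k V : Type*} [Field k] [IsAlgClosed k]
    [AddCommGroup V] [Module k V] [FiniteDimensional k V] (s : Set (Module.End k V))
    (hs : ∀ U : Submodule k V, (∀ f ∈ s, ∀ v ∈ U, f v ∈ U) → U = ⊥ ∨ U = ⊤) :
    Algebra.adjoin k s = ⊤ := by
  rcases subsingleton_or_nontrivial V with _ | _
  · exact Subsingleton.elim _ _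
  set S := Algebra.adjoin k s
  have : IsSimpleModule S V := by
    refine { toIsSimpleOrder := { eq_bot_or_eq_top := fun p => ?_ } }
    have hp := hs (p.restrictScalars k) fun f hf v hv =>
      p.smul_mem ⟨f, Algebra.subset_adjoin hf⟩ hv
    simpa only [Submodule.restrictScalars_eq_bot_iff, Submodule.restrictScalars_eq_top_iff]
      using hp
  have hscalar := IsSimpleModule.algebraMap_end_bijective_of_isAlgClosed (A := S) (V := V) k
  have : Module.Finite (Module.End S V) V := Module.Finite.of_restrictScalars_finite k _ _
  refine Algebra.eq_top_iff.2 fun f => ?_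
  let F : Module.End (Module.End S V) V :=
    { toFun := f
      map_add' := f.map_add
      map_smul' := fun φ v => by
        obtain ⟨c, rfl⟩ := hscalar.2 φ
        simp }
  obtain ⟨t, ht⟩ := Module.Finite.toModuleEnd_moduleEnd_surjective (R := S) (M := V) F
  have : (t : Module.End k V) = f := LinearMap.ext fun v => congrArg (· v) ht
  rw [← this]
  exact t.2

abbrev MatrixRep (k H ι : Type*) [Field k] [Monoid H] [Fintype ι] [DecidableEq ι] :=
  H →* Matrix ι ι k

namespace MatrixRep

variable {k H ι κ : Type*} [Field k] [Monoid H] [Fintype ι] [DecidableEq ι] [Fintype κ]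
  [DecidableEq κ]

def IsIrreducible (ρ : MatrixRep k H ι) : Prop :=
  ∀ U : Submodule k (ι → k), (∀ h, ∀ v ∈ U, ρ h *ᵥ v ∈ U) → U = ⊥ ∨ U = ⊤

def twist (ρ : MatrixRep k H ι) (χ : H →* kˣ) : MatrixRep k H ι where
  toFun h := (χ h : k) • ρ h
  map_one' := by simp
  map_mul' x y := by rw [map_mul, map_mul, Units.val_mul, smul_mul_smul_comm]

def traceCoeff (ρ : MatrixRep k H ι) : Matrix ι ι k →ₗ[k] H → k :=
  LinearMap.pi fun h => traceLinearMap ι k k ∘ₗ LinearMap.mulRight k (ρ h)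

variable {ρ : MatrixRep k H ι} {σ : MatrixRep k H κ}

theorem twist_apply (χ : H →* kˣ) (h : H) : ρ.twist χ h = (χ h : k) • ρ h := rfl

theorem IsIrreducible.twist (hρ : ρ.IsIrreducible) (χ : H →* kˣ) :
    (ρ.twist χ).IsIrreducible := by
  refine fun U hU => hρ U fun h v hv => ?_
  have hχ := U.smul_mem ((χ h)⁻¹ : kˣ) (hU h v hv)
  simpa [twist_apply, smul_mulVec, Units.smul_def, smul_smul] using hχ

theorem traceCoeff_apply (M : Matrix ι ι k) (h : H) : ρ.traceCoeff M h = (M * ρ h).trace := rfl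

theorem traceCoeff_mul_apply (M : Matrix ι ι k) (x h : H) :
    ρ.traceCoeff (M * ρ x) h = ρ.traceCoeff M (x * h) := by
  simp only [traceCoeff_apply, map_mul, Matrix.mul_assoc]

theorem traceCoeff_apply_mul (M : Matrix ι ι k) (x h : H) :
    ρ.traceCoeff (ρ x * M) h = ρ.traceCoeff M (h * x) := by
  simp only [traceCoeff_apply, map_mul, Matrix.mul_assoc, trace_mul_comm (ρ x)]

theorem traceCoeff_self_eq_of_trace_eq (htr : ∀ h, (ρ h).trace = (σ h).trace) (x : H) :
    ρ.traceCoeff (ρ x) = σ.traceCoeff (σ x) := by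
  ext h
  simp only [traceCoeff_apply, ← map_mul, htr]

section IsAlgClosed

variable [IsAlgClosed k]

theorem IsIrreducible.adjoin_range_eq_top (hρ : ρ.IsIrreducible) :
    Algebra.adjoin k (Set.range ρ) = ⊤ := by
  let e : Matrix ι ι k →ₐ[k] Module.End k (ι → k) := toLinAlgEquiv'.toAlgHom
  have he : Function.Injective e := toLinAlgEquiv'.injective
  have h := Algebra.adjoin_eq_top_of_forall_invariant (e '' Set.range ρ)
    fun U hU => hρ U fun h v hv => by simpa [e] using hU _ ⟨ρ h, ⟨h, rfl⟩, rfl⟩ v hv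
  rw [Algebra.adjoin_image] at h
  rw [← Subalgebra.comap_map_eq_self_of_injective he (Algebra.adjoin k _), h,
    Algebra.comap_top]

theorem IsIrreducible.span_range_eq_top (hρ : ρ.IsIrreducible) :
    Submodule.span k (Set.range ρ) = ⊤ := by
  have h := congrArg Subalgebra.toSubmodule hρ.adjoin_range_eq_top
  rwa [Algebra.adjoin_eq_span, ← MonoidHom.coe_mrange, Submonoid.closure_eq,
    Algebra.top_toSubmodule] at h

theorem IsIrreducible.exists_eq_smul_one_of_commute (hρ : ρ.IsIrreducible) {M : Matrix ι ι k}
    (hM : ∀ h, Commute M (ρ h)) : ∃ c : k, M = c • 1 := by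
  have hall : ∀ X, Commute M X := LinearMap.congr_fun <|
    LinearMap.ext_on_range (f := LinearMap.mulLeft k M) (g := LinearMap.mulRight k M)
      hρ.span_range_eq_top fun h => hM h
  obtain ⟨c, hc⟩ := mem_range_scalar_iff_commute_single'.2 fun i j => (hall _).symm
  exact ⟨c, by rw [← hc, scalar_apply, smul_one_eq_diagonal]⟩

theorem IsIrreducible.traceCoeff_injective (hρ : ρ.IsIrreducible) :
    Function.Injective ρ.traceCoeff := fun M M' h =>
  ext_iff_trace_mul_right.2 <| LinearMap.congr_fun <|
    LinearMap.ext_on_range (f := traceLinearMap ι k k ∘ₗ LinearMap.mulLeft k M)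
      (g := traceLinearMap ι k k ∘ₗ LinearMap.mulLeft k M') hρ.span_range_eq_top
      fun x => congr_fun h x

theorem range_traceCoeff_le (hσ : σ.IsIrreducible) (htr : ∀ h, (ρ h).trace = (σ h).trace) :
    LinearMap.range σ.traceCoeff ≤ LinearMap.range ρ.traceCoeff := by
  rw [LinearMap.range_eq_map, ← hσ.span_range_eq_top, Submodule.map_span, Submodule.span_le]
  rintro _ ⟨_, ⟨x, rfl⟩, rfl⟩
  exact ⟨ρ x, traceCoeff_self_eq_of_trace_eq htr x⟩

/-- The matrix `R` with the same coefficients as `Q` intertwines `ρ` with `ρ ∘ a` like `P` does,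
so `R = c • P` by Schur's lemma, and `tr Q = tr R` by evaluating the coefficients at `1`. -/
theorem exists_trace_eq_mul_trace_of_intertwines (hρ : ρ.IsIrreducible) (hσ : σ.IsIrreducible)
    (htr : ∀ h, (ρ h).trace = (σ h).trace) (a : H → H) (P : (Matrix ι ι k)ˣ)
    (hP : ∀ h, (P : Matrix ι ι k) * ρ h = ρ (a h) * P) {Q : Matrix κ κ k}
    (hQ : ∀ h, Q * σ h = σ (a h) * Q) :
    ∃ c : k, Q.trace = c * (P : Matrix ι ι k).trace := by
  obtain ⟨R, hR⟩ := range_traceCoeff_le hσ htr ⟨Q, rfl⟩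
  have hRρ : ∀ h, R * ρ h = ρ (a h) * R := fun h => hρ.traceCoeff_injective <| funext fun x => by
    rw [traceCoeff_mul_apply, traceCoeff_apply_mul, hR, ← traceCoeff_mul_apply, hQ,
      traceCoeff_apply_mul]
  have hPinv : ∀ h, (↑P⁻¹ : Matrix ι ι k) * ρ (a h) = ρ h * (↑P⁻¹ : Matrix ι ι k) := fun h => by
    rw [Units.inv_mul_eq_iff_eq_mul, ← mul_assoc, hP, mul_assoc, P.mul_inv, mul_one]
  obtain ⟨c, hc⟩ := hρ.exists_eq_smul_one_of_commute (M := (↑P⁻¹ : Matrix ι ι k) * R)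
    fun h => by rw [Commute, SemiconjBy, mul_assoc, hRρ, ← mul_assoc, hPinv, mul_assoc]
  have hRP : R = c • (P : Matrix ι ι k) := by
    rw [← P.mul_inv_cancel_left R, hc, mul_smul_comm, mul_one]
  refine ⟨c, ?_⟩
  have h1 := congr_fun hR 1
  simp only [traceCoeff_apply, map_one, mul_one, hRP, trace_smul, smul_eq_mul] at h1
  exact h1.symm

end IsAlgClosed

end MatrixRep

namespace TwistPaper

variable {G : Type*} [Group G]

def IsIrrRep.toMatrixRep {N : Subgroup G} {n : ℕ} {Θ : G → Matrix (Fin n) (Fin n) ℂ}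
    (hΘ : IsIrrRep N Θ) : MatrixRep ℂ N (Fin n) where
  toFun x := Θ x
  map_one' := hΘ.2.1
  map_mul' x y := hΘ.1 x x.2 y y.2

theorem IsIrrRep.toMatrixRep_apply {N : Subgroup G} {n : ℕ} {Θ : G → Matrix (Fin n) (Fin n) ℂ}
    (hΘ : IsIrrRep N Θ) (x : N) : hΘ.toMatrixRep x = Θ x :=
  rfl

theorem IsIrrRep.isIrreducible_toMatrixRep {N : Subgroup G} {n : ℕ}
    {Θ : G → Matrix (Fin n) (Fin n) ℂ} (hΘ : IsIrrRep N Θ) : hΘ.toMatrixRep.IsIrreducible :=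
  fun U hU => hΘ.2.2.2 U fun x hx => hU ⟨x, hx⟩

theorem IsStrongExtRep.mul_conj {N K : Subgroup G} [N.Normal] {n : ℕ}
    {Θ Pi : G → Matrix (Fin n) (Fin n) ℂ} {α : G → G → ℂˣ} (hPi : IsStrongExtRep N K Θ Pi α)
    {g x : G} (hg : g ∈ K) (hx : x ∈ N) : Pi g * Θ x = Θ (g * x * g⁻¹) * Pi g := by
  have hconj := (hPi.2.2.1 g hg _ (Subgroup.Normal.conj_mem ‹_› x hx g)).2
  rw [inv_mul_cancel_right] at hconj
  rw [← (hPi.2.2.1 g hg x hx).1, hconj]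

theorem IsStrongExtChar.exists_matrixRep {N K : Subgroup G} [N.Normal] {θ θhat : G → ℂ}
    (hse : IsStrongExtChar N K θ θhat) {g : G} (hg : g ∈ K) :
    ∃ (n : ℕ) (ρ : MatrixRep ℂ N (Fin n)) (P : (Matrix (Fin n) (Fin n) ℂ)ˣ),
      ρ.IsIrreducible ∧ (∀ x, (ρ x).trace = θ x) ∧
      (∀ x, (P : Matrix (Fin n) (Fin n) ℂ) * ρ x = ρ (MulAut.conjNormal g x) * P) ∧
      θhat g = (P : Matrix (Fin n) (Fin n) ℂ).trace := by
  obtain ⟨α, n, -, Θ, Pi, hΘ, hθ, -, hPi, hθhat⟩ := hse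
  refine ⟨n, hΘ.toMatrixRep, (hPi.2.1 g hg).unit, hΘ.isIrreducible_toMatrixRep,
    fun x => (hθ x x.2).symm, fun x => ?_, hθhat g hg⟩
  simpa only [IsUnit.unit_spec, IsIrrRep.toMatrixRep_apply, MulAut.conjNormal_apply] using
    hPi.mul_conj hg x.2

theorem IsStrongExtChar.eq_zero_iff_of_twist {N K : Subgroup G} [N.Normal]
    {θ θhat θhat' : G → ℂ} {ψ : G →* ℂˣ} (hse : IsStrongExtChar N K θ θhat)
    (hse' : IsStrongExtChar N K (fun x => θ x * (ψ x : ℂ)) θhat') {g : G} (hg : g ∈ K) :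
    θhat g = 0 ↔ θhat' g = 0 := by
  obtain ⟨n, ρ, P, hρ, hρθ, hP, hθhat⟩ := hse.exists_matrixRep hg
  obtain ⟨m, ρ', P', hρ', hρ'θ, hP', hθhat'⟩ := hse'.exists_matrixRep hg
  set σ := ρ'.twist (ψ⁻¹.comp N.subtype)
  have htr : ∀ x, (ρ x).trace = (σ x).trace := fun x => by
    simp only [σ, MatrixRep.twist_apply, MonoidHom.comp_apply, MonoidHom.inv_apply,
      Subgroup.coe_subtype, Units.val_inv_eq_inv_val, trace_smul, smul_eq_mul, hρθ, hρ'θ]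
    rw [mul_left_comm, inv_mul_cancel₀ (ψ x).ne_zero, mul_one]
  have hP'σ : ∀ x, (P' : Matrix (Fin m) (Fin m) ℂ) * σ x = σ (MulAut.conjNormal g x) * P' := by
    intro x
    simp [σ, MatrixRep.twist_apply, hP' x, MulAut.conjNormal_apply, mul_inv_cancel_comm]
  obtain ⟨c, hc⟩ :=
    MatrixRep.exists_trace_eq_mul_trace_of_intertwines hρ (hρ'.twist _) htr _ P hP hP'σ
  obtain ⟨c', hc'⟩ := MatrixRep.exists_trace_eq_mul_trace_of_intertwines (hρ'.twist _) hρ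
    (fun x => (htr x).symm) _ P' hP'σ hP
  rw [hθhat, hθhat']
  exact ⟨fun h => by rw [hc, h, mul_zero], fun h => by rw [hc', h, mul_zero]⟩

theorem statement7_general (N K : Subgroup G) [N.Normal]
    (θ : G → ℂ) (ψ : G →* ℂˣ)
    (θhat θhat' : G → ℂ)
    (hse : IsStrongExtChar N K θ θhat)
    (hse' : IsStrongExtChar N K (fun x => θ x * (ψ x : ℂ)) θhat') :
    ∀ ν : G → ℂˣ, LinKN N K ν →
      ((∃ ε : G →* ℂˣ, ∀ x ∈ K, θhat' x * (ε x : ℂ) = θhat' x * (ν x : ℂ)) ↔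
        (∃ ε : G →* ℂˣ, ∀ x ∈ K, θhat x * (ε x : ℂ) = θhat x * (ν x : ℂ))) := by
  intro ν _
  simp only [mul_eq_mul_left_iff]
  exact exists_congr fun ε => forall₂_congr fun x hx =>
    or_congr_right (hse.eq_zero_iff_of_twist hse' hx).symm

/-- `Γ_{K,θ̃}` is independent of the choice of representative of the twist
class `θ̃` and of the choice of strong extension. -/
theorem statement7 (N K : Subgroup G) [N.Normal] (hfin : N.relIndex K ≠ 0) (hNK : N ≤ K)
    (θ : G → ℂ) (hθ : IsIrrChar N θ) (hKstab : ∀ k ∈ K, InK N θ k) (ψ : G →* ℂˣ)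
    (θhat θhat' : G → ℂ)
    (hse : IsStrongExtChar N K θ θhat)
    (hse' : IsStrongExtChar N K (fun x => θ x * (ψ x : ℂ)) θhat') :
    ∀ ν : G → ℂˣ, LinKN N K ν →
      ((∃ ε : G →* ℂˣ, ∀ x ∈ K, θhat' x * (ε x : ℂ) = θhat' x * (ν x : ℂ)) ↔
        (∃ ε : G →* ℂˣ, ∀ x ∈ K, θhat x * (ε x : ℂ) = θhat x * (ν x : ℂ))) :=
  statement7_general N K θ ψ θhat θhat' hse hse'

end TwistPaper
end

section
/- Let q be a prime dividing |L/N| and let μ ∈ Z¹(L_q/N, F_K) be a 1-cocycle. Suppose there exists a function ω_q : K/N → W_{(q)} such that for all g ∈ L_q one has μ(gN)_{(q)} = (ᵍω_q)·ω_q⁻¹·ν_g for some ν_g ∈ Γ. Then the induced map μ̄ : L_q/N → F_K/Γ, gN ↦ μ(gN)·Γ, is a 1-coboundary: μ̄ ∈ B¹(L_q/N, F_K/Γ). -/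
namespace TwistPaper

variable {G : Type*} [Group G]

/-!
Averaging the cocycle `μ` over a transversal of `N` in `L_q` gives
`P = ∏_c μ(c)` with `P = μ(g)^{|L_q/N|} · ᵍP`, so after multiplying by the coboundary of a
`|L_q/N|`-th root `ω₀` of `P⁻¹`, the cocycle `τ_g = μ(g) · (ᵍω₀)⁻¹ · ω₀` takes values of
`q`-power order. Hence `τ` is fixed by `π_q`, and applying `π_q` to the hypothesis on
`μ(g)_{(q)}` shows that `μ(g) ≡ ᵍω · ω⁻¹ (mod Γ)` for `ω = ω₀ · ω_q · π_q(ω₀)⁻¹`.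
-/

theorem Units.exists_pow_eq_of_isAlgClosed {k : Type*} [Field k] [IsAlgClosed k] (z : kˣ)
    {n : ℕ} (hn : 0 < n) : ∃ w : kˣ, w ^ n = z := by
  obtain ⟨w, hw⟩ := IsAlgClosed.exists_pow_nat_eq (z : k) hn
  have hw0 : w ≠ 0 := by
    rintro rfl
    exact z.ne_zero (by rw [← hw, zero_pow hn.ne'])
  exact ⟨Units.mk0 w hw0, Units.ext (by simpa using hw)⟩

theorem eq_coboundary_mul_of_map_eq {M : Type*} [CommGroup M] (π : M →* M)
    {μ a b ωa ωb ν : M} (hτ : π (μ * a⁻¹ * b) = μ * a⁻¹ * b) (hπμ : π μ = ωa * ωb⁻¹ * ν) :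
    μ = a * ωa * (π a)⁻¹ * (b * ωb * (π b)⁻¹)⁻¹ * ν := by
  have hμ : μ = π (μ * a⁻¹ * b) * a * b⁻¹ := by
    rw [hτ, mul_right_comm _ b, inv_mul_cancel_right, mul_inv_cancel_right]
  rw [hμ, map_mul, map_mul, map_inv, hπμ]
  simp only [mul_inv, inv_inv, mul_comm, mul_left_comm, mul_assoc]

section CosetProd

variable {M : Type*} [CommGroup M]

noncomputable def cosetProd (N H : Subgroup G) [Fintype (H ⧸ N.subgroupOf H)]
    (μ : G → G → M) (x : G) : M :=
  ∏ c : H ⧸ N.subgroupOf H, μ (c.out : G) x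

variable {N H K : Subgroup G} {μ : G → G → M}

theorem cosetProd_congr [Fintype (H ⧸ N.subgroupOf H)] {x y : G}
    (h : ∀ g ∈ H, μ g x = μ g y) : cosetProd N H μ x = cosetProd N H μ y :=
  Finset.prod_congr rfl fun c _ => h _ c.out.2

theorem apply_out_smul (hμN : ∀ g ∈ H, ∀ n ∈ N, ∀ x ∈ K, μ (g * n) x = μ g x)
    (hμ : ∀ g ∈ H, ∀ g' ∈ H, ∀ x ∈ K, μ (g * g') x = μ g x * μ g' (g⁻¹ * x * g))
    {g : H} (c : H ⧸ N.subgroupOf H) {x : G} (hx : x ∈ K) :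
    μ ((g • c).out : G) x = μ g x * μ (c.out : G) (g⁻¹ * x * g) := by
  have hc : g • c = QuotientGroup.mk (g * c.out) := by
    conv_lhs => rw [← QuotientGroup.out_eq' c]
    rfl
  obtain ⟨n, hn⟩ := QuotientGroup.mk_out_eq_mul (N.subgroupOf H) (g * c.out)
  rw [hc, hn, Subgroup.coe_mul, Subgroup.coe_mul,
    hμN _ (mul_mem g.2 c.out.2) _ (Subgroup.mem_subgroupOf.mp n.2) x hx]
  exact hμ g g.2 _ c.out.2 x hx

theorem cosetProd_eq_pow_mul [Fintype (H ⧸ N.subgroupOf H)]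
    (hμN : ∀ g ∈ H, ∀ n ∈ N, ∀ x ∈ K, μ (g * n) x = μ g x)
    (hμ : ∀ g ∈ H, ∀ g' ∈ H, ∀ x ∈ K, μ (g * g') x = μ g x * μ g' (g⁻¹ * x * g))
    {g : G} (hg : g ∈ H) {x : G} (hx : x ∈ K) :
    cosetProd N H μ x =
      μ g x ^ Nat.card (H ⧸ N.subgroupOf H) * cosetProd N H μ (g⁻¹ * x * g) := by
  calc cosetProd N H μ x
      = ∏ c : H ⧸ N.subgroupOf H, μ (((⟨g, hg⟩ : H) • c).out : G) x :=
        (Equiv.prod_comp (MulAction.toPerm (⟨g, hg⟩ : H))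
          fun c : H ⧸ N.subgroupOf H => μ (c.out : G) x).symm
    _ = ∏ c : H ⧸ N.subgroupOf H, μ g x * μ (c.out : G) (g⁻¹ * x * g) :=
        Finset.prod_congr rfl fun c _ => apply_out_smul hμN hμ c hx
    _ = _ := by
        rw [Finset.prod_mul_distrib, Finset.prod_const, Finset.card_univ,
          Nat.card_eq_fintype_card]
        rfl

end CosetProd

theorem statement11_general (N K L Lq : Subgroup G)
    (q : ℕ) (hq : q.Prime) (hSyl : IsSylowOver q N Lq L)
    (Γ : Subgroup (G → ℂˣ))
    -- the fixed projection `π_q : ℂˣ → W_{(q)}` onto the `q`-primary part of the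
    -- roots of unity
    (π : ℂˣ →* ℂˣ)
    (hπ1 : ∀ z : ℂˣ, (∃ k : ℕ, z ^ q ^ k = 1) → π z = z)
    -- `μ ∈ Z¹(L_q/N, F_K)`
    (μ : G → G → ℂˣ)
    (hμconst : ∀ g ∈ Lq, NConst N K (μ g))
    (hμN : ∀ g ∈ Lq, ∀ n ∈ N, ∀ x ∈ K, μ (g * n) x = μ g x)
    (hμcocycle : ∀ g ∈ Lq, ∀ g' ∈ Lq, ∀ x ∈ K, μ (g * g') x = μ g x * μ g' (g⁻¹ * x * g))
    -- the function `ω_q : K/N → W_{(q)}` with `μ(gN)_{(q)} = (ᵍω_q)·ω_q⁻¹·ν_g`, `ν_g ∈ Γ`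
    (ωq : G → ℂˣ) (hωqconst : NConst N K ωq)
    (hhyp : ∀ g ∈ Lq, ∃ ν ∈ Γ, ∀ x ∈ K,
        π (μ g x) = ωq (g⁻¹ * x * g) * (ωq x)⁻¹ * ν x) :
    -- conclusion: `μ̄ ∈ B¹(L_q/N, F_K/Γ)`
    ∃ ω : G → ℂˣ, NConst N K ω ∧ ∀ g ∈ Lq, ∃ ν ∈ Γ, ∀ x ∈ K,
      μ g x = ω (g⁻¹ * x * g) * (ω x)⁻¹ * ν x := by
  obtain ⟨-, -, ⟨a, ha⟩, -⟩ := hSyl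
  have hcard : Nat.card (Lq ⧸ N.subgroupOf Lq) = q ^ a := ha
  have hpos : 0 < q ^ a := pow_pos hq.pos a
  have : Finite (Lq ⧸ N.subgroupOf Lq) := Nat.finite_of_card_ne_zero (hcard ▸ hpos.ne')
  have := Fintype.ofFinite (Lq ⧸ N.subgroupOf Lq)
  choose r hr using fun z : ℂˣ => Units.exists_pow_eq_of_isAlgClosed z hpos
  set ω₀ : G → ℂˣ := fun x => r (cosetProd N Lq μ x)⁻¹ with hω₀
  refine ⟨fun x => ω₀ x * ωq x * (π (ω₀ x))⁻¹, fun x hx n hn => ?_, fun g hg => ?_⟩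
  · simp only [hω₀, cosetProd_congr fun g hg => hμconst g hg x hx n hn, hωqconst x hx n hn]
  obtain ⟨ν, hνΓ, hν⟩ := hhyp g hg
  refine ⟨ν, hνΓ, fun x hx => eq_coboundary_mul_of_map_eq π (hπ1 _ ⟨a, ?_⟩) (hν x hx)⟩
  have hP := cosetProd_eq_pow_mul hμN hμcocycle hg hx
  rw [hcard] at hP
  rw [mul_pow, mul_pow, inv_pow, hω₀, hr, hr, hP]
  group

/-- if the `q`-part `μ(gN)_{(q)}` of a `1`-cocycle
`μ ∈ Z¹(L_q/N, F_K)` is, modulo `Γ`, a coboundary of a `W_{(q)}`-valued function `ω_q`,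
then the induced map `μ̄ : L_q/N → F_K/Γ` is a `1`-coboundary. -/
theorem statement11 (N K L Lq : Subgroup G) [N.Normal] (hfin : N.relIndex L ≠ 0)
    (hNK : N ≤ K) (hKL : K ≤ L) (hKnorm : ∀ g ∈ L, ∀ k ∈ K, g * k * g⁻¹ ∈ K)
    (q : ℕ) (hq : q.Prime) (hqdvd : q ∣ N.relIndex L) (hSyl : IsSylowOver q N Lq L)
    (Γ : Subgroup (G → ℂˣ)) (hΓlin : ∀ ν ∈ Γ, LinKN N K ν)
    (hΓinv : ∀ g ∈ L, ∀ ν ∈ Γ, (fun x => ν (g⁻¹ * x * g)) ∈ Γ)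
    -- the fixed projection `π_q : ℂˣ → W_{(q)}` onto the `q`-primary part of the
    -- roots of unity
    (π : ℂˣ →* ℂˣ)
    (hπ1 : ∀ z : ℂˣ, (∃ k : ℕ, z ^ q ^ k = 1) → π z = z)
    (hπ2 : ∀ (z : ℂˣ) (n : ℕ), 0 < n → z ^ n = 1 → ¬ q ∣ n → π z = 1)
    -- `μ ∈ Z¹(L_q/N, F_K)`
    (μ : G → G → ℂˣ)
    (hμconst : ∀ g ∈ Lq, NConst N K (μ g))
    (hμN : ∀ g ∈ Lq, ∀ n ∈ N, ∀ x ∈ K, μ (g * n) x = μ g x)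
    (hμcocycle : ∀ g ∈ Lq, ∀ g' ∈ Lq, ∀ x ∈ K, μ (g * g') x = μ g x * μ g' (g⁻¹ * x * g))
    -- the function `ω_q : K/N → W_{(q)}` with `μ(gN)_{(q)} = (ᵍω_q)·ω_q⁻¹·ν_g`, `ν_g ∈ Γ`
    (ωq : G → ℂˣ) (hωqconst : NConst N K ωq)
    (hωqW : ∀ x ∈ K, ∃ k : ℕ, ωq x ^ q ^ k = 1)
    (hhyp : ∀ g ∈ Lq, ∃ ν ∈ Γ, ∀ x ∈ K,
        π (μ g x) = ωq (g⁻¹ * x * g) * (ωq x)⁻¹ * ν x) :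
    -- conclusion: `μ̄ ∈ B¹(L_q/N, F_K/Γ)`
    ∃ ω : G → ℂˣ, NConst N K ω ∧ ∀ g ∈ Lq, ∃ ν ∈ Γ, ∀ x ∈ K,
      μ g x = ω (g⁻¹ * x * g) * (ω x)⁻¹ * ν x :=
  statement11_general N K L Lq q hq hSyl Γ π hπ1 μ hμconst hμN hμcocycle ωq hωqconst hhyp

end TwistPaper
end
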